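/- Let β₀, β₁ ∈ (0,1) with β₀ + β₁ > 1. For every finite binary string σ, P_{β₀,β₁}(σ0 ∉ Prune(ω) and σ1 ∈ Prune(ω) | σ ∈ Prune(ω)) = 1 − β₀; that is, the conditional probability that a node of the pruned infinite Galton–Watson tree has only a right child is 1 − β₀. -/

import Mathlib

open MeasureTheory

/-- The Galton–Watson tree of `ω`: all binary strings all of whose nonempty prefixes survive. -/
def gwTree (ω : {σ : List Bool // σ ≠ []} → Bool) : Set (List Bool) :=
  {σ | ∀ τ : {σ : List Bool // σ ≠ []}, τ.val <+: σ → ω τ = true}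

/-- The pruned tree: nodes of the Galton–Watson tree above which the tree is infinite
(has infinitely many extensions in the tree). -/
def gwPrune (ω : {σ : List Bool // σ ≠ []} → Bool) : Set (List Bool) :=
  {σ | σ ∈ gwTree ω ∧ {τ | σ <+: τ ∧ τ ∈ gwTree ω}.Infinite}

/-- Probability that coordinate `σ` takes value `b`: it is `1` (survives) with probability
`β₀` if the last bit of `σ` is `0`, and `β₁` if the last bit of `σ` is `1`. -/
def gwP (β₀ β₁ : ℝ) (σ : {σ : List Bool // σ ≠ []}) (b : Bool) : ℝ :=
  if b then (if σ.val.getLast σ.prop = false then β₀ else β₁)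
  else 1 - (if σ.val.getLast σ.prop = false then β₀ else β₁)

/-- `P` is the product measure `P_{β₀,β₁}`: a probability measure with independent coordinates,
coordinate `σ` equal to `1` with probability `β₀` or `β₁` according to the last bit of `σ`,
as expressed by its finite-dimensional distributions. -/
def IsGWMeasure (β₀ β₁ : ℝ) (P : Measure ({σ : List Bool // σ ≠ []} → Bool)) : Prop :=
  IsProbabilityMeasure P ∧
    ∀ (S : Finset {σ : List Bool // σ ≠ []}) (f : {σ : List Bool // σ ≠ []} → Bool),
      P {ω | ∀ σ ∈ S, ω σ = f σ} = ENNReal.ofReal (∏ σ ∈ S, gwP β₀ β₁ σ (f σ))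

/-!
Relative to a node `σ`, the environment `ω` above `σ` is again `P`-distributed, because the law
of a coordinate depends only on its last bit, and it is independent of the coordinates at the
prefixes of `σ`. Conditioning on `σ ∈ Prune(ω)` therefore reduces the statement to the root.

At the root, `Prune(ω)` contains `[]` iff it contains a child `[b]`, and the children survive
independently, each with probability `β_b q`, where `q` is the probability that `Tree(ω)` is
infinite. Hence `q` is a fixed point of `x ↦ 1 - (1 - β₀ x) (1 - β₁ x)`. The probabilities that
`Tree(ω)` reaches depth `n` decrease to `q` and, by monotonicity of this map, stay above its
positive fixed point `p = (β₀ + β₁ - 1) / (β₀ β₁)`, so `q = p`. The conditional probability is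
then `(1 - β₀ p) β₁ p / p = 1 - β₀`.
-/

namespace List

variable {α : Type*}

lemma prefix_append_cases {ρ σ τ : List α} (h : ρ <+: σ ++ τ) :
    ρ <+: σ ∨ ∃ t, t <+: τ ∧ ρ = σ ++ t := by
  rcases le_total ρ.length σ.length with hl | hl
  · exact .inl (prefix_of_prefix_length_le h (σ.prefix_append τ) hl)
  · obtain ⟨t, rfl⟩ := prefix_of_prefix_length_le (σ.prefix_append τ) h hl
    exact .inr ⟨t, (prefix_append_right_inj σ).mp h, rfl⟩

lemma prefix_iff_eq_or_exists_append_singleton_prefix {σ ρ : List α} :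
    σ <+: ρ ↔ ρ = σ ∨ ∃ a, σ ++ [a] <+: ρ := by
  refine ⟨?_, ?_⟩
  · rintro ⟨t, rfl⟩
    rcases t with _ | ⟨a, t⟩
    · exact .inl (append_nil σ)
    · exact .inr ⟨a, (prefix_append_right_inj σ).mpr ⟨t, rfl⟩⟩
  · rintro (rfl | ⟨a, h⟩)
    · exact prefix_refl _
    · exact (σ.prefix_append [a]).trans h

end List

namespace GaltonWatson

open ProbabilityTheory

section Coordinates

variable {ι κ β : Type*} [MeasurableSpace β]

abbrev coordMeasurableSpace (I : Set ι) : MeasurableSpace (ι → β) :=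
  ⨆ i ∈ I, MeasurableSpace.comap (fun ω => ω i) ‹_›

lemma coordMeasurableSpace_le_pi (I : Set ι) :
    coordMeasurableSpace I ≤ (MeasurableSpace.pi : MeasurableSpace (ι → β)) :=
  iSup₂_le fun i _ => (measurable_pi_apply i).comap_le

lemma coordMeasurableSpace_mono {I J : Set ι} (h : I ⊆ J) :
    (coordMeasurableSpace I : MeasurableSpace (ι → β)) ≤ coordMeasurableSpace J :=
  biSup_mono h

lemma measurable_apply_of_mem {I : Set ι} {i : ι} (hi : i ∈ I) :
    Measurable[coordMeasurableSpace I] fun ω : ι → β => ω i :=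
  Measurable.of_comap_le (le_biSup (fun j => MeasurableSpace.comap (fun ω : ι → β => ω j) ‹_›) hi)

lemma measurable_comp_of_range_subset {I : Set ι} {g : κ → ι} (hg : Set.range g ⊆ I) :
    Measurable[coordMeasurableSpace I] fun ω : ι → β => ω ∘ g :=
  @measurable_pi_lambda _ _ _ (coordMeasurableSpace I) _ _
    fun k => measurable_apply_of_mem (hg ⟨k, rfl⟩)

lemma measurableSet_apply_eq_of_mem [MeasurableSingletonClass β] {I : Set ι} {i : ι}
    (hi : i ∈ I) (b : β) : MeasurableSet[coordMeasurableSpace I] {ω : ι → β | ω i = b} :=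
  measurable_apply_of_mem hi (measurableSet_singleton b)

lemma indep_coordMeasurableSpace {P : Measure (ι → β)} (hP : iIndepFun (fun i ω => ω i) P)
    {I J : Set ι} (hIJ : Disjoint I J) :
    Indep (coordMeasurableSpace I) (coordMeasurableSpace J) P :=
  indep_iSup_of_disjoint (fun i => (measurable_pi_apply i).comap_le)
    ((iIndepFun_iff_iIndep _ _ _).mp hP) hIJ

lemma measure_inter_of_coordMeasurableSpace {P : Measure (ι → β)}
    (hP : iIndepFun (fun i ω => ω i) P) {I J : Set ι} (hIJ : Disjoint I J) {A B : Set (ι → β)}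
    (hA : MeasurableSet[coordMeasurableSpace I] A) (hB : MeasurableSet[coordMeasurableSpace J] B) :
    P (A ∩ B) = P A * P B :=
  (Indep_iff _ _ _).mp (indep_coordMeasurableSpace hP hIJ) A B hA hB

/-- An independent family is determined by its marginals, so reindexing along an injection
that preserves every marginal preserves the law. -/
lemma measurePreserving_comp_of_iIndepFun {P : Measure (ι → β)} [IsProbabilityMeasure P]
    (hP : iIndepFun (fun i ω => ω i) P) {g : ι → ι} (hg : g.Injective)
    (hmarg : ∀ i, P.map (fun ω => ω (g i)) = P.map (fun ω => ω i)) :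
    MeasurePreserving (fun ω : ι → β => ω ∘ g) P P where
  measurable := measurable_pi_iff.mpr fun i => measurable_pi_apply (g i)
  map_eq := by
    have hmeas (i : ι) : Measurable fun ω : ι → β => ω i := measurable_pi_apply i
    calc P.map (fun ω => ω ∘ g)
        = Measure.infinitePi fun i => P.map (fun ω => ω (g i)) :=
          (hP.precomp hg).map_fun_eq_infinitePi_map fun i => hmeas (g i)
      _ = P.map (fun ω i => ω i) := by
          simp_rw [hmarg]; exact (hP.map_fun_eq_infinitePi_map hmeas).symm
      _ = P := Measure.map_id

end Coordinates

lemma comap_apply_bool_eq_generateFrom {ι : Type*} (i : ι) :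
    MeasurableSpace.comap (fun ω : ι → Bool => ω i) inferInstance =
      MeasurableSpace.generateFrom {{ω | ω i = true}} := by
  have hgen : MeasurableSet[MeasurableSpace.generateFrom {{ω : ι → Bool | ω i = true}}]
      {ω | ω i = true} := MeasurableSpace.measurableSet_generateFrom rfl
  refine le_antisymm (Measurable.comap_le ?_) (MeasurableSpace.generateFrom_le ?_)
  · refine @measurable_to_countable' Bool (ι → Bool) _ _ (MeasurableSpace.generateFrom _) _
      fun b => ?_
    cases b
    · convert hgen.compl using 1
      ext ω; simp
    · exact hgen
  · rintro _ rfl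
    exact ⟨{true}, trivial, rfl⟩

lemma iIndepFun_apply_of_measure_forall_eq_true {ι : Type*} {P : Measure (ι → Bool)}
    (hP : ∀ S : Finset ι, P {ω | ∀ i ∈ S, ω i = true} = ∏ i ∈ S, P {ω | ω i = true}) :
    iIndepFun (fun i ω => ω i) P := by
  rw [iIndepFun_iff_iIndep]
  simp_rw [comap_apply_bool_eq_generateFrom]
  refine (iIndepSet_iff_meas_biInter fun i =>
    measurableSet_eq_fun (measurable_pi_apply i) measurable_const).mpr fun S => ?_
  rw [← hP S]
  congr 1
  ext ω
  simp

lemma cond_inter_preimage_eq_cond {Ω Ω' : Type*} [MeasurableSpace Ω] [MeasurableSpace Ω']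
    {P : Measure Ω} [IsFiniteMeasure P] {Q : Measure Ω'} {f : Ω → Ω'} (hf : MeasurePreserving f P Q)
    {T : Set Ω} (hT : MeasurableSet T) (hT0 : P T ≠ 0)
    (hindep : ∀ H, MeasurableSet H → P (T ∩ f ⁻¹' H) = P T * P (f ⁻¹' H))
    {F G : Set Ω'} (hF : MeasurableSet F) (hG : MeasurableSet G) :
    cond P (T ∩ f ⁻¹' F) (f ⁻¹' G) = cond Q F G := by
  have hmeasure (H : Set Ω') (hH : MeasurableSet H) : P (T ∩ f ⁻¹' H) = P T * Q H := by
    rw [hindep H hH, hf.measure_preimage hH.nullMeasurableSet]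
  rw [cond_apply (hT.inter (hf.measurable hF)), cond_apply hF, Set.inter_assoc,
    ← Set.preimage_inter, hmeasure F hF, hmeasure _ (hF.inter hG),
    ENNReal.mul_inv (.inl hT0) (.inl (measure_ne_top P T)), mul_mul_mul_comm,
    ENNReal.inv_mul_cancel hT0 (measure_ne_top P T), one_mul]

section BranchingMap

variable {β₀ β₁ : ℝ}

noncomputable def survivalProb (β₀ β₁ : ℝ) : ℝ := (β₀ + β₁ - 1) / (β₀ * β₁)

/-- If each child's subtree survives with probability `x`, the root survives with probability
`branchingMap β₀ β₁ x`. -/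
def branchingMap (β₀ β₁ x : ℝ) : ℝ := 1 - (1 - β₀ * x) * (1 - β₁ * x)

lemma survivalProb_pos (h0 : 0 < β₀) (h1 : 0 < β₁) (hsum : 1 < β₀ + β₁) :
    0 < survivalProb β₀ β₁ :=
  div_pos (by linarith) (mul_pos h0 h1)

lemma survivalProb_le_one (h0 : 0 < β₀) (h1 : 0 < β₁) (h0' : β₀ ≤ 1) (h1' : β₁ ≤ 1) :
    survivalProb β₀ β₁ ≤ 1 := by
  rw [survivalProb, div_le_one (mul_pos h0 h1)]
  nlinarith [mul_nonneg (sub_nonneg.mpr h0') (sub_nonneg.mpr h1')]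

lemma branchingMap_survivalProb (h0 : β₀ ≠ 0) (h1 : β₁ ≠ 0) :
    branchingMap β₀ β₁ (survivalProb β₀ β₁) = survivalProb β₀ β₁ := by
  unfold branchingMap survivalProb
  field_simp
  ring

lemma eq_survivalProb_of_branchingMap_eq {x : ℝ} (h0 : β₀ ≠ 0) (h1 : β₁ ≠ 0) (hx : x ≠ 0)
    (h : branchingMap β₀ β₁ x = x) : x = survivalProb β₀ β₁ := by
  have hfactor : x * (β₀ + β₁ - 1 - β₀ * β₁ * x) = 0 := by
    unfold branchingMap at h; linear_combination h
  rw [survivalProb, eq_div_iff (mul_ne_zero h0 h1)]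
  linarith [(mul_eq_zero.mp hfactor).resolve_left hx]

/-- `branchingMap` is increasing on `[0, 1]` and fixes `survivalProb`. -/
lemma survivalProb_le_branchingMap {x : ℝ} (h0 : 0 < β₀) (h1 : 0 < β₁) (h0' : β₀ ≤ 1)
    (h1' : β₁ ≤ 1) (hx : survivalProb β₀ β₁ ≤ x) (hx1 : x ≤ 1) :
    survivalProb β₀ β₁ ≤ branchingMap β₀ β₁ x := by
  set p := survivalProb β₀ β₁
  have hfix := branchingMap_survivalProb h0.ne' h1.ne'
  have hslope : β₀ * β₁ * (x + p) ≤ β₀ + β₁ := by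
    nlinarith [mul_le_mul_of_nonneg_left h1' h0.le, mul_le_mul_of_nonneg_right h0' h1.le,
      mul_pos h0 h1]
  have hdiff : branchingMap β₀ β₁ x - branchingMap β₀ β₁ p =
      (x - p) * (β₀ + β₁ - β₀ * β₁ * (x + p)) := by
    unfold branchingMap; ring
  nlinarith [mul_nonneg (sub_nonneg.mpr hx) (sub_nonneg.mpr hslope)]

end BranchingMap

abbrev Node : Type := {σ : List Bool // σ ≠ []}

def appendNode (σ : List Bool) (τ : Node) : Node := ⟨σ ++ τ.1, by simp [τ.2]⟩

lemma appendNode_injective (σ : List Bool) : Function.Injective (appendNode σ) :=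
  fun _ _ h => Subtype.ext (List.append_cancel_left (congrArg Subtype.val h))

/-- `Tree(shift σ ω)` is the part of `Tree(ω)` above `σ`, with the prefix `σ` removed. -/
def shift (σ : List Bool) (ω : Node → Bool) : Node → Bool := ω ∘ appendNode σ

lemma nil_mem_gwTree (ω : Node → Bool) : [] ∈ gwTree ω :=
  fun τ h => absurd (List.eq_nil_of_prefix_nil h) τ.2

lemma mem_gwTree_of_prefix {ω : Node → Bool} {σ τ : List Bool} (hτ : τ ∈ gwTree ω)
    (h : σ <+: τ) : σ ∈ gwTree ω :=
  fun ρ hρ => hτ ρ (hρ.trans h)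

lemma append_mem_gwTree_iff {ω : Node → Bool} {σ τ : List Bool} :
    σ ++ τ ∈ gwTree ω ↔ σ ∈ gwTree ω ∧ τ ∈ gwTree (shift σ ω) := by
  refine ⟨fun h => ⟨mem_gwTree_of_prefix h (σ.prefix_append τ), fun ρ hρ =>
    h (appendNode σ ρ) ((List.prefix_append_right_inj σ).mpr hρ)⟩, ?_⟩
  rintro ⟨hσ, hτ⟩ ⟨ρ, hρ0⟩ hρ
  rcases List.prefix_append_cases hρ with hρσ | ⟨t, ht, rfl⟩
  · exact hσ _ hρσ
  · rcases t with _ | ⟨b, t⟩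
    · exact hσ _ (by simp)
    · exact hτ ⟨_, List.cons_ne_nil b t⟩ ht

lemma singleton_mem_gwTree_iff {ω : Node → Bool} {b : Bool} :
    [b] ∈ gwTree ω ↔ ω ⟨[b], List.cons_ne_nil b []⟩ = true := by
  refine ⟨fun h => h _ (List.prefix_refl _), fun h ⟨ρ, hρ0⟩ hρ => ?_⟩
  obtain rfl : ρ = [b] := by
    rcases List.prefix_cons_iff.mp hρ with rfl | ⟨t, rfl, ht⟩
    · exact absurd rfl hρ0
    · rw [List.eq_nil_of_prefix_nil ht]
  exact h

lemma extensions_append {ω : Node → Bool} {σ τ : List Bool} (hσ : σ ∈ gwTree ω) :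
    {ρ | σ ++ τ <+: ρ ∧ ρ ∈ gwTree ω} =
      (σ ++ ·) '' {ρ | τ <+: ρ ∧ ρ ∈ gwTree (shift σ ω)} := by
  ext ρ
  constructor
  · rintro ⟨hρ, hρT⟩
    obtain ⟨t, rfl⟩ := (σ.prefix_append τ).trans hρ
    exact ⟨t, ⟨(List.prefix_append_right_inj σ).mp hρ, (append_mem_gwTree_iff.mp hρT).2⟩, rfl⟩
  · rintro ⟨t, ⟨ht, htT⟩, rfl⟩
    exact ⟨(List.prefix_append_right_inj σ).mpr ht, append_mem_gwTree_iff.mpr ⟨hσ, htT⟩⟩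

lemma append_mem_gwPrune_iff {ω : Node → Bool} {σ τ : List Bool} :
    σ ++ τ ∈ gwPrune ω ↔ σ ∈ gwTree ω ∧ τ ∈ gwPrune (shift σ ω) := by
  simp only [gwPrune, Set.mem_ofPred_eq, append_mem_gwTree_iff]
  constructor
  · rintro ⟨⟨hσ, hτ⟩, hinf⟩
    rw [extensions_append hσ] at hinf
    exact ⟨hσ, hτ, (Set.infinite_image_iff (List.append_right_injective σ).injOn).mp hinf⟩
  · rintro ⟨hσ, hτ, hinf⟩
    rw [extensions_append hσ]
    exact ⟨⟨hσ, hτ⟩, hinf.image (List.append_right_injective σ).injOn⟩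

lemma mem_gwPrune_iff_or {ω : Node → Bool} {σ : List Bool} :
    σ ∈ gwPrune ω ↔ σ ++ [false] ∈ gwPrune ω ∨ σ ++ [true] ∈ gwPrune ω := by
  have hext : {ρ | σ <+: ρ ∧ ρ ∈ gwTree ω} = {ρ | ρ = σ ∧ ρ ∈ gwTree ω} ∪
      ({ρ | σ ++ [false] <+: ρ ∧ ρ ∈ gwTree ω} ∪ {ρ | σ ++ [true] <+: ρ ∧ ρ ∈ gwTree ω}) := by
    ext ρ
    simp only [Set.mem_ofPred_eq, Set.mem_union]
    rw [List.prefix_iff_eq_or_exists_append_singleton_prefix, Bool.exists_bool]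
    tauto
  have hfin : {ρ | ρ = σ ∧ ρ ∈ gwTree ω}.Finite :=
    (Set.finite_singleton σ).subset fun ρ hρ => hρ.1
  have hchild (b : Bool) (h : {ρ | σ ++ [b] <+: ρ ∧ ρ ∈ gwTree ω}.Infinite) :
      σ ++ [b] ∈ gwTree ω :=
    let ⟨_, hσρ, hρ⟩ := h.nonempty
    mem_gwTree_of_prefix hρ hσρ
  simp only [gwPrune, Set.mem_ofPred_eq, hext, Set.infinite_union, hfin.not_infinite, false_or]
  constructor
  · rintro ⟨-, h | h⟩
    exacts [.inl ⟨hchild _ h, h⟩, .inr ⟨hchild _ h, h⟩]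
  · rintro (⟨hb, h⟩ | ⟨hb, h⟩)
    exacts [⟨mem_gwTree_of_prefix hb (σ.prefix_append _), .inl h⟩,
      ⟨mem_gwTree_of_prefix hb (σ.prefix_append _), .inr h⟩]

lemma nil_mem_gwPrune_iff {ω : Node → Bool} : [] ∈ gwPrune ω ↔ (gwTree ω).Infinite := by
  simp [gwPrune, nil_mem_gwTree]

lemma gwTree_infinite_iff {ω : Node → Bool} :
    (gwTree ω).Infinite ↔ ∀ n, ∃ τ ∈ gwTree ω, τ.length = n := by
  refine ⟨fun h n => ?_, fun h => ?_⟩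
  · obtain ⟨τ, hτ, hn⟩ : ∃ τ ∈ gwTree ω, n ≤ τ.length := by
      by_contra! hc
      exact h ((List.finite_length_lt Bool n).subset hc)
    exact ⟨τ.take n, mem_gwTree_of_prefix hτ (τ.take_prefix n), by simpa using hn⟩
  · choose τ hτ hlen using h
    exact Set.infinite_of_injective_forall_mem
      (fun m n hmn => by rw [← hlen m, ← hlen n, hmn]) hτ

lemma exists_mem_gwTree_length_succ_iff {ω : Node → Bool} {n : ℕ} :
    (∃ τ ∈ gwTree ω, τ.length = n + 1) ↔
      ∃ b, [b] ∈ gwTree ω ∧ ∃ τ ∈ gwTree (shift [b] ω), τ.length = n := by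
  constructor
  · rintro ⟨_ | ⟨b, τ⟩, hτ, hlen⟩
    · simp at hlen
    · exact ⟨b, (append_mem_gwTree_iff (σ := [b]).mp hτ).1,
        τ, (append_mem_gwTree_iff (σ := [b]).mp hτ).2, by simpa using hlen⟩
  · rintro ⟨b, hb, τ, hτ, rfl⟩
    exact ⟨[b] ++ τ, append_mem_gwTree_iff.mpr ⟨hb, hτ⟩, by simp⟩

def prefixNodes (σ : List Bool) : Finset Node := σ.inits.toFinset.subtype (· ≠ [])

@[simp]
lemma mem_prefixNodes {σ : List Bool} {i : Node} : i ∈ prefixNodes σ ↔ i.1 <+: σ := by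
  simp [prefixNodes]

lemma disjoint_prefixNodes_range_appendNode (σ : List Bool) :
    Disjoint (prefixNodes σ : Set Node) (Set.range (appendNode σ)) := by
  refine Set.disjoint_left.mpr ?_
  rintro _ hi ⟨j, rfl⟩
  have hlen := (mem_prefixNodes.mp hi).length_le
  have hj := List.length_pos_iff.mpr j.2
  simp only [appendNode, List.length_append] at hlen
  omega

lemma setOf_mem_gwTree_eq (σ : List Bool) :
    {ω | σ ∈ gwTree ω} = {ω : Node → Bool | ∀ i ∈ prefixNodes σ, ω i = true} := by
  ext ω
  simp [gwTree]

lemma measurableSet_setOf_mem_gwTree (σ : List Bool) :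
    MeasurableSet[coordMeasurableSpace (prefixNodes σ : Set Node)] {ω | σ ∈ gwTree ω} := by
  rw [setOf_mem_gwTree_eq]
  simp_rw [Set.ofPred_forall]
  exact MeasurableSet.iInter fun i => MeasurableSet.iInter fun hi =>
    measurableSet_apply_eq_of_mem (Finset.mem_coe.mpr hi) true

def branch (b : Bool) (F : Set (Node → Bool)) : Set (Node → Bool) :=
  {ω | [b] ∈ gwTree ω} ∩ shift [b] ⁻¹' F

def survival : Set (Node → Bool) := {ω | [] ∈ gwPrune ω}

def level (n : ℕ) : Set (Node → Bool) := {ω | ∃ τ ∈ gwTree ω, τ.length = n}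

lemma setOf_singleton_mem_gwPrune_eq_branch (b : Bool) :
    {ω | [b] ∈ gwPrune ω} = branch b survival := by
  ext ω
  simpa [branch, survival] using append_mem_gwPrune_iff (ω := ω) (σ := [b]) (τ := [])

lemma survival_eq_union_branch : survival = branch false survival ∪ branch true survival := by
  rw [← setOf_singleton_mem_gwPrune_eq_branch, ← setOf_singleton_mem_gwPrune_eq_branch]
  ext ω
  simpa [survival] using mem_gwPrune_iff_or (ω := ω) (σ := [])

lemma survival_eq_iInter_level : survival = ⋂ n, level n := by
  ext ω
  simp [survival, level, nil_mem_gwPrune_iff, gwTree_infinite_iff]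

lemma level_zero : level 0 = Set.univ :=
  Set.eq_univ_of_forall fun ω => ⟨[], nil_mem_gwTree ω, rfl⟩

lemma level_succ (n : ℕ) : level (n + 1) = branch false (level n) ∪ branch true (level n) := by
  ext ω
  simpa [level, branch, Bool.exists_bool] using exists_mem_gwTree_length_succ_iff (ω := ω) (n := n)

lemma antitone_level : Antitone level := by
  intro m n hmn ω ⟨τ, hτ, hlen⟩
  exact ⟨τ.take m, mem_gwTree_of_prefix hτ (τ.take_prefix m), by simp [hlen, hmn]⟩

def subtreeNodes (b : Bool) : Set Node := {i | [b] <+: i.1}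

lemma disjoint_subtreeNodes : Disjoint (subtreeNodes false) (subtreeNodes true) :=
  Set.disjoint_left.mpr fun _ h0 h1 => by
    simpa using (List.prefix_of_prefix_length_le h0 h1 le_rfl).head

lemma measurableSet_branch (b : Bool) {F : Set (Node → Bool)} (hF : MeasurableSet F) :
    MeasurableSet[coordMeasurableSpace (subtreeNodes b)] (branch b F) := by
  have hroot : (prefixNodes [b] : Set Node) ⊆ subtreeNodes b := fun ⟨ρ, hρ⟩ hi => by
    rcases List.prefix_cons_iff.mp (mem_prefixNodes.mp hi) with rfl | ⟨t, rfl, ht⟩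
    · exact absurd rfl hρ
    · exact List.cons_prefix_cons.mpr ⟨rfl, List.nil_prefix⟩
  exact (coordMeasurableSpace_mono hroot _ (measurableSet_setOf_mem_gwTree [b])).inter
    (measurable_comp_of_range_subset (by rintro _ ⟨j, rfl⟩; exact ⟨j.1, rfl⟩) hF)

lemma measurableSet_level (n : ℕ) : MeasurableSet (level n) := by
  induction n with
  | zero => exact level_zero ▸ MeasurableSet.univ
  | succ n ih =>
    rw [level_succ]
    exact (coordMeasurableSpace_le_pi _ _ (measurableSet_branch false ih)).union
      (coordMeasurableSpace_le_pi _ _ (measurableSet_branch true ih))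

lemma measurableSet_survival : MeasurableSet survival :=
  survival_eq_iInter_level ▸ MeasurableSet.iInter measurableSet_level

lemma setOf_only_right_child_eq :
    {ω | [false] ∉ gwPrune ω ∧ [true] ∈ gwPrune ω} =
      (branch false survival)ᶜ ∩ branch true survival := by
  simp_rw [← setOf_singleton_mem_gwPrune_eq_branch]
  rfl

lemma measurableSet_setOf_only_right_child :
    MeasurableSet {ω | [false] ∉ gwPrune ω ∧ [true] ∈ gwPrune ω} :=
  setOf_only_right_child_eq ▸
    (coordMeasurableSpace_le_pi _ _ (measurableSet_branch false measurableSet_survival)).compl.inter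
      (coordMeasurableSpace_le_pi _ _ (measurableSet_branch true measurableSet_survival))

lemma setOf_mem_gwPrune_eq (σ : List Bool) :
    {ω | σ ∈ gwPrune ω} = {ω | σ ∈ gwTree ω} ∩ shift σ ⁻¹' survival := by
  ext ω
  simpa [survival] using append_mem_gwPrune_iff (ω := ω) (σ := σ) (τ := [])

lemma measurableSet_setOf_mem_gwPrune (σ : List Bool) : MeasurableSet {ω | σ ∈ gwPrune ω} :=
  setOf_mem_gwPrune_eq σ ▸ (coordMeasurableSpace_le_pi _ _ (measurableSet_setOf_mem_gwTree σ)).inter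
    (coordMeasurableSpace_le_pi _ _
      (measurable_comp_of_range_subset subset_rfl measurableSet_survival))

lemma setOf_mem_gwPrune_inter_only_right_child_eq (σ : List Bool) :
    {ω | σ ∈ gwPrune ω} ∩ {ω | σ ++ [false] ∉ gwPrune ω ∧ σ ++ [true] ∈ gwPrune ω} =
      {ω | σ ∈ gwPrune ω} ∩ shift σ ⁻¹' {ω | [false] ∉ gwPrune ω ∧ [true] ∈ gwPrune ω} := by
  ext ω
  have hσ : σ ∈ gwPrune ω → σ ∈ gwTree ω := And.left
  simp only [Set.mem_inter_iff, Set.mem_ofPred_eq, Set.mem_preimage, append_mem_gwPrune_iff]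
  tauto

variable {β₀ β₁ : ℝ} {P : Measure (Node → Bool)}

lemma gwP_appendNode (σ : List Bool) (i : Node) (b : Bool) :
    gwP β₀ β₁ (appendNode σ i) b = gwP β₀ β₁ i b := by
  simp only [gwP, appendNode, List.getLast_append_of_ne_nil _ i.2]

lemma gwP_true_pos (h0 : 0 < β₀) (h1 : 0 < β₁) (i : Node) : 0 < gwP β₀ β₁ i true := by
  simp only [gwP, if_true]; split_ifs <;> assumption

lemma _root_.IsGWMeasure.measure_apply_eq (hP : IsGWMeasure β₀ β₁ P) (i : Node) (b : Bool) :
    P {ω | ω i = b} = ENNReal.ofReal (gwP β₀ β₁ i b) := by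
  simpa using hP.2 {i} fun _ => b

lemma _root_.IsGWMeasure.iIndepFun (hP : IsGWMeasure β₀ β₁ P) (h0 : 0 < β₀) (h1 : 0 < β₁) :
    iIndepFun (fun i ω => ω i) P :=
  iIndepFun_apply_of_measure_forall_eq_true fun S => by
    rw [hP.2, ENNReal.ofReal_prod_of_nonneg fun i _ => (gwP_true_pos h0 h1 i).le]
    exact Finset.prod_congr rfl fun i _ => (hP.measure_apply_eq i true).symm

lemma _root_.IsGWMeasure.measurePreserving_shift (hP : IsGWMeasure β₀ β₁ P) (h0 : 0 < β₀)
    (h1 : 0 < β₁) (σ : List Bool) : MeasurePreserving (shift σ) P P :=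
  have := hP.1
  measurePreserving_comp_of_iIndepFun (hP.iIndepFun h0 h1) (appendNode_injective σ) fun i =>
    (Measure.ext_iff_singleton).mpr fun b => by
      rw [Measure.map_apply (measurable_pi_apply (appendNode σ i)) (measurableSet_singleton b),
        Measure.map_apply (measurable_pi_apply i) (measurableSet_singleton b)]
      simp only [Set.preimage, Set.mem_singleton_iff, hP.measure_apply_eq, gwP_appendNode]

lemma measure_setOf_mem_gwTree_ne_zero (hP : IsGWMeasure β₀ β₁ P) (h0 : 0 < β₀) (h1 : 0 < β₁)
    (σ : List Bool) : P {ω | σ ∈ gwTree ω} ≠ 0 := by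
  rw [setOf_mem_gwTree_eq, hP.2, ENNReal.ofReal_ne_zero_iff]
  exact Finset.prod_pos fun i _ => gwP_true_pos h0 h1 i

lemma measure_setOf_mem_gwTree_inter_shift_preimage (hP : IsGWMeasure β₀ β₁ P) (h0 : 0 < β₀)
    (h1 : 0 < β₁) (σ : List Bool) {F : Set (Node → Bool)} (hF : MeasurableSet F) :
    P ({ω | σ ∈ gwTree ω} ∩ shift σ ⁻¹' F) = P {ω | σ ∈ gwTree ω} * P (shift σ ⁻¹' F) :=
  measure_inter_of_coordMeasurableSpace (hP.iIndepFun h0 h1)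
    (disjoint_prefixNodes_range_appendNode σ) (measurableSet_setOf_mem_gwTree σ)
    (measurable_comp_of_range_subset subset_rfl hF)

lemma cond_setOf_mem_gwTree_inter_shift_preimage (hP : IsGWMeasure β₀ β₁ P) (h0 : 0 < β₀)
    (h1 : 0 < β₁) (σ : List Bool) {F G : Set (Node → Bool)} (hF : MeasurableSet F)
    (hG : MeasurableSet G) :
    cond P ({ω | σ ∈ gwTree ω} ∩ shift σ ⁻¹' F) (shift σ ⁻¹' G) = cond P F G :=
  have := hP.1
  cond_inter_preimage_eq_cond (hP.measurePreserving_shift h0 h1 σ)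
    (coordMeasurableSpace_le_pi _ _ (measurableSet_setOf_mem_gwTree σ))
    (measure_setOf_mem_gwTree_ne_zero hP h0 h1 σ)
    (fun _ hH => measure_setOf_mem_gwTree_inter_shift_preimage hP h0 h1 σ hH) hF hG

lemma measureReal_branch (hP : IsGWMeasure β₀ β₁ P) (h0 : 0 < β₀) (h1 : 0 < β₁) (b : Bool)
    {F : Set (Node → Bool)} (hF : MeasurableSet F) :
    P.real (branch b F) = (bif b then β₁ else β₀) * P.real F := by
  have hroot : P.real {ω | [b] ∈ gwTree ω} = bif b then β₁ else β₀ := by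
    simp_rw [singleton_mem_gwTree_iff]
    rw [measureReal_def, hP.measure_apply_eq, ENNReal.toReal_ofReal (gwP_true_pos h0 h1 _).le]
    cases b <;> rfl
  rw [← hroot, branch, measureReal_def, measure_setOf_mem_gwTree_inter_shift_preimage hP h0 h1 _ hF,
    (hP.measurePreserving_shift h0 h1 [b]).measure_preimage hF.nullMeasurableSet,
    ENNReal.toReal_mul, measureReal_def, measureReal_def]

lemma measureReal_inter_of_subtreeNodes (hP : IsGWMeasure β₀ β₁ P) (h0 : 0 < β₀) (h1 : 0 < β₁)
    {A B : Set (Node → Bool)} (hA : MeasurableSet[coordMeasurableSpace (subtreeNodes false)] A)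
    (hB : MeasurableSet[coordMeasurableSpace (subtreeNodes true)] B) :
    P.real (A ∩ B) = P.real A * P.real B := by
  simp only [measureReal_def, measure_inter_of_coordMeasurableSpace (hP.iIndepFun h0 h1)
    disjoint_subtreeNodes hA hB, ENNReal.toReal_mul]

lemma measureReal_branch_union (hP : IsGWMeasure β₀ β₁ P) (h0 : 0 < β₀) (h1 : 0 < β₁)
    {F : Set (Node → Bool)} (hF : MeasurableSet F) :
    P.real (branch false F ∪ branch true F) = branchingMap β₀ β₁ (P.real F) := by
  have := hP.1
  have hA := measurableSet_branch false hF
  have hB := measurableSet_branch true hF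
  rw [← compl_compl (branch false F ∪ branch true F), Set.compl_union,
    probReal_compl_eq_one_sub ((coordMeasurableSpace_le_pi _ _ hA.compl).inter
      (coordMeasurableSpace_le_pi _ _ hB.compl)),
    measureReal_inter_of_subtreeNodes hP h0 h1 hA.compl hB.compl,
    probReal_compl_eq_one_sub (coordMeasurableSpace_le_pi _ _ hA),
    probReal_compl_eq_one_sub (coordMeasurableSpace_le_pi _ _ hB),
    measureReal_branch hP h0 h1 false hF, measureReal_branch hP h0 h1 true hF]
  rfl

lemma measureReal_survival (hP : IsGWMeasure β₀ β₁ P) (h0 : β₀ ∈ Set.Ioo (0 : ℝ) 1)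
    (h1 : β₁ ∈ Set.Ioo (0 : ℝ) 1) (hsum : 1 < β₀ + β₁) :
    P.real survival = survivalProb β₀ β₁ := by
  have := hP.1
  have hlevel (n : ℕ) : survivalProb β₀ β₁ ≤ P.real (level n) := by
    induction n with
    | zero => simpa [level_zero] using survivalProb_le_one h0.1 h1.1 h0.2.le h1.2.le
    | succ n ih =>
      rw [level_succ, measureReal_branch_union hP h0.1 h1.1 (measurableSet_level n)]
      exact survivalProb_le_branchingMap h0.1 h1.1 h0.2.le h1.2.le ih measureReal_le_one
  have hlim : Filter.Tendsto (fun n => P.real (level n)) Filter.atTop (nhds (P.real survival)) := by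
    rw [survival_eq_iInter_level]
    exact (ENNReal.tendsto_toReal (measure_ne_top P _)).comp (tendsto_measure_iInter_atTop
      (fun n => (measurableSet_level n).nullMeasurableSet) antitone_level ⟨0, measure_ne_top P _⟩)
  have hpos : 0 < P.real survival :=
    (survivalProb_pos h0.1 h1.1 hsum).trans_le (ge_of_tendsto' hlim hlevel)
  refine eq_survivalProb_of_branchingMap_eq h0.1.ne' h1.1.ne' hpos.ne' ?_
  conv_rhs => rw [survival_eq_union_branch]
  exact (measureReal_branch_union hP h0.1 h1.1 measurableSet_survival).symm

lemma cond_survival_only_right_child (hP : IsGWMeasure β₀ β₁ P)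
    (h0 : β₀ ∈ Set.Ioo (0 : ℝ) 1) (h1 : β₁ ∈ Set.Ioo (0 : ℝ) 1) (hsum : 1 < β₀ + β₁) :
    cond P survival {ω | [false] ∉ gwPrune ω ∧ [true] ∈ gwPrune ω} = ENNReal.ofReal (1 - β₀) := by
  have := hP.1
  have hA := measurableSet_branch false measurableSet_survival
  have hB := measurableSet_branch true measurableSet_survival
  have hp := survivalProb_pos h0.1 h1.1 hsum
  have hevent : survival ∩ ((branch false survival)ᶜ ∩ branch true survival) =
      (branch false survival)ᶜ ∩ branch true survival :=
    Set.inter_eq_right.mpr fun ω hω => survival_eq_union_branch ▸ Or.inr hω.2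
  rw [cond_apply measurableSet_survival, setOf_only_right_child_eq, hevent,
    ← ofReal_measureReal, ← ofReal_measureReal,
    measureReal_inter_of_subtreeNodes hP h0.1 h1.1 hA.compl hB,
    probReal_compl_eq_one_sub (coordMeasurableSpace_le_pi _ _ hA),
    measureReal_branch hP h0.1 h1.1 false measurableSet_survival,
    measureReal_branch hP h0.1 h1.1 true measurableSet_survival,
    measureReal_survival hP h0 h1 hsum, ← ENNReal.ofReal_inv_of_pos hp,
    ← ENNReal.ofReal_mul (inv_nonneg.mpr hp.le)]
  congr 1
  have hβp : β₀ * survivalProb β₀ β₁ = (β₀ + β₁ - 1) / β₁ := by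
    rw [survivalProb, mul_div_assoc', mul_div_mul_left _ _ h0.1.ne']
  calc (survivalProb β₀ β₁)⁻¹ * ((1 - β₀ * survivalProb β₀ β₁) * (β₁ * survivalProb β₀ β₁))
      = (1 - β₀ * survivalProb β₀ β₁) * β₁ := by field_simp
    _ = 1 - β₀ := by rw [hβp, one_sub_mul, div_mul_cancel₀ _ h1.1.ne']; ring

end GaltonWatson

open GaltonWatson ProbabilityTheory

/-- For `β₀, β₁ ∈ (0,1)` with `β₀ + β₁ > 1` and every finite binary string
`σ`: the conditional probability, given `σ ∈ Prune(ω)`, that `σ` has only a right child in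
`Prune(ω)` (i.e. `σ0 ∉ Prune(ω)` and `σ1 ∈ Prune(ω)`) is `1 - β₀`. -/
theorem stmt10 (β₀ β₁ : ℝ) (h0 : β₀ ∈ Set.Ioo (0 : ℝ) 1) (h1 : β₁ ∈ Set.Ioo (0 : ℝ) 1)
    (hsum : 1 < β₀ + β₁)
    (P : Measure ({σ : List Bool // σ ≠ []} → Bool)) (hP : IsGWMeasure β₀ β₁ P)
    (σ : List Bool) :
    ProbabilityTheory.cond P {ω | σ ∈ gwPrune ω}
        {ω | σ ++ [false] ∉ gwPrune ω ∧ σ ++ [true] ∈ gwPrune ω} =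
      ENNReal.ofReal (1 - β₀) := by
  have hmeas := measurableSet_setOf_mem_gwPrune σ
  rw [← cond_inter_self hmeas, setOf_mem_gwPrune_inter_only_right_child_eq, cond_inter_self hmeas,
    setOf_mem_gwPrune_eq, cond_setOf_mem_gwTree_inter_shift_preimage hP h0.1 h1.1 σ
      measurableSet_survival measurableSet_setOf_only_right_child,
    cond_survival_only_right_child hP h0 h1 hsum]
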